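/- Let F(t) ∈ ℤ[[t]] have constant term 1 (integer coefficients), and let (a(k))_{k≥1} be the unique rationals with ∏_{k≥1} (1+t^k)^{a(k)} = F(t). Then a(k) is an integer for every k ≥ 1. -/

import Mathlib

/-!
Comparing coefficients of `t^k` in `∏_{j ≤ k} (1 + t^j)^(a j)` shows that
`a k = [t^k] F - [t^k] ∏_{j < k} (1 + t^j)^(a j)`, since `(1 + t^k)^(a k) = 1 + a k · t^k + O(t^{2k})`.
By strong induction the exponents `a j` with `j < k` are integers, so the factors of the
remaining product are binomial series of integer exponents and have integer coefficients.
-/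

/-- The binomial series `(1 + t^k)^a = ∑_{i≥0} C(a,i) t^(k·i)` in `ℚ[[t]]`,
for a rational exponent `a`, where `C(a,i) = a(a-1)⋯(a-i+1)/i!` is the
generalized binomial coefficient (`Ring.choose`). -/
noncomputable def binomPow (a : ℚ) (k : ℕ) : PowerSeries ℚ :=
  PowerSeries.mk fun n => if k ∣ n then Ring.choose a (n / k) else 0

/-- `a : ℕ → ℚ` is the sequence of exponents of `F ∈ ℚ[[t]]` in the
factorization `F = ∏_{k≥1} (1 + t^k)^(a k)`. The t-adically convergent
infinite product is expressed coefficientwise: the factor for `k` is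
`1 + O(t^k)`, so the coefficient of `t^n` of the product is that of the
finite partial product over `1 ≤ k ≤ n`. -/
def IsExpSeq (F : PowerSeries ℚ) (a : ℕ → ℚ) : Prop :=
  ∀ n : ℕ,
    PowerSeries.coeff n (∏ k ∈ Finset.Icc 1 n, binomPow (a k) k) =
      PowerSeries.coeff n F

open PowerSeries

lemma constantCoeff_binomPow (a : ℚ) (k : ℕ) : constantCoeff (binomPow a k) = 1 := by
  simp [binomPow]

lemma coeff_binomPow_self (a : ℚ) {k : ℕ} (hk : 1 ≤ k) : coeff k (binomPow a k) = a := by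
  simp [binomPow, Nat.div_self hk]

lemma coeff_binomPow_of_pos_of_lt (a : ℚ) {k n : ℕ} (h0 : 0 < n) (hn : n < k) :
    coeff n (binomPow a k) = 0 := by
  have hndvd : ¬ k ∣ n := fun h => (Nat.le_of_dvd h0 h).not_gt hn
  simp [binomPow, hndvd]

lemma binomPow_intCast_mem_range (m : ℤ) (k : ℕ) :
    binomPow (m : ℚ) k ∈ (map (Int.castRingHom ℚ)).range :=
  ⟨mk fun n => if k ∣ n then Ring.choose m (n / k) else 0, by
    ext n
    simp only [coeff_map, coeff_mk, binomPow]
    split_ifs <;> simp [Ring.map_choose]⟩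

lemma coeff_mul_binomPow_self (P : ℚ⟦X⟧) (a : ℚ) {k : ℕ} (hk : 1 ≤ k) :
    coeff k (P * binomPow a k) = constantCoeff P * a + coeff k P := by
  rw [coeff_mul, Finset.sum_eq_add_of_mem (0, k) (k, 0) (by simp) (by simp) (by simp; omega)]
  · simp only [coeff_zero_eq_constantCoeff_apply, constantCoeff_binomPow, coeff_binomPow_self _ hk,
      mul_one]
  · rintro ⟨i, j⟩ hij ⟨hi, hj⟩
    have hsum : i + j = k := Finset.HasAntidiagonal.mem_antidiagonal.mp hij
    rw [coeff_binomPow_of_pos_of_lt _ (by grind) (by grind), mul_zero]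

lemma IsExpSeq.eq_coeff_sub_coeff_prod {F : ℚ⟦X⟧} {a : ℕ → ℚ} (ha : IsExpSeq F a) {k : ℕ}
    (hk : 1 ≤ k) :
    a k = coeff k F - coeff k (∏ j ∈ Finset.Ico 1 k, binomPow (a j) j) := by
  have h := ha k
  rw [← Finset.Ico_insert_right hk, Finset.prod_insert Finset.right_notMem_Ico, mul_comm,
    coeff_mul_binomPow_self _ _ hk, map_prod, Finset.prod_eq_one fun j _ => constantCoeff_binomPow _ _, one_mul] at h
  linarith

theorem stmt6_general (F : PowerSeries ℤ)
    (a : ℕ → ℚ) (ha : IsExpSeq (PowerSeries.map (Int.castRingHom ℚ) F) a) :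
    ∀ k : ℕ, 1 ≤ k → ∃ m : ℤ, a k = m := by
  intro k
  induction k using Nat.strong_induction_on with
  | _ k ih =>
  intro hk
  have hprod : ∏ j ∈ Finset.Ico 1 k, binomPow (a j) j ∈ (map (Int.castRingHom ℚ)).range := by
    refine Subring.prod_mem _ fun j hj => ?_
    obtain ⟨hj1, hjk⟩ := Finset.mem_Ico.mp hj
    obtain ⟨m, hm⟩ := ih j hjk hj1
    exact hm ▸ binomPow_intCast_mem_range m j
  obtain ⟨P, hP⟩ := hprod
  refine ⟨coeff k F - coeff k P, ?_⟩
  rw [ha.eq_coeff_sub_coeff_prod hk, ← hP]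
  simp

/-- if `F ∈ ℤ[[t]]` has constant term 1 and the rationals
`(a k)_{k≥1}` satisfy `∏_{k≥1}(1+t^k)^(a k) = F` (viewing `F` in ℚ[[t]]),
then each `a k` (for `k ≥ 1`) is an integer. -/
theorem stmt6 (F : PowerSeries ℤ) (hF : PowerSeries.constantCoeff F = 1)
    (a : ℕ → ℚ) (ha : IsExpSeq (PowerSeries.map (Int.castRingHom ℚ) F) a) :
    ∀ k : ℕ, 1 ≤ k → ∃ m : ℤ, a k = m :=
  stmt6_general F a ha
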